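/- The sum over k = 1, …, N of cot²(θ_k) equals N·(ρ²·(2 + cos(4α)) − 1)/(1 − cos(4α)); in particular it does not depend on t. -/

import Mathlib

/-!
For `u, v, w` on the unit circle, `conj (u - v) * (w - v)` has argument half that of `w / u`
(inscribed angle theorem), so `cot² ∠ u v w = ‖u + w‖² / ‖u - w‖²` depends only on the two
neighbours of `v`. The harmonic polygon is the image of the regular one under the involution
`ζ ↦ (d ζ - 1) / (ζ - d)` of the unit circle, applied to `conj z_k = exp (-i ψ_k)` with
`ψ_k = 2αk + t`, and computing `w_{k-1} ± w_{k+1}` gives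
`cot² θ_k = (2d cos ψ_k - (1 + d²) cos 2α)² / ((1 - d²)² sin² 2α)`.
Expanding the square, the terms in `cos ψ_k` and `cos 2ψ_k` sum to zero over `k`, being real
parts of sums of nontrivial `N`-th roots of unity; this is where `N ≥ 3` enters.
-/

open Real Finset ComplexConjugate EuclideanGeometry

theorem cot_sq_angle_eq (x y : ℂ) :
    (cos (InnerProductGeometry.angle x y) / sin (InnerProductGeometry.angle x y)) ^ 2 =
      (conj x * y).re ^ 2 / (conj x * y).im ^ 2 := by
  set X := conj x * y
  have hnorm : ‖x‖ * ‖y‖ = ‖X‖ := by rw [norm_mul, Complex.norm_conj]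
  have hcos : cos (InnerProductGeometry.angle x y) = X.re / ‖X‖ := by
    rw [InnerProductGeometry.cos_angle, hnorm, Complex.inner, mul_comm]
  have hsin : sin (InnerProductGeometry.angle x y) ^ 2 = 1 - (X.re / ‖X‖) ^ 2 := by
    rw [sin_sq, hcos]
  rw [div_pow, hsin, hcos]
  rcases eq_or_ne ‖X‖ 0 with h0 | h0
  · simp [norm_eq_zero.mp h0]
  have hX : ‖X‖ ^ 2 = X.re ^ 2 + X.im ^ 2 := by rw [Complex.sq_norm, Complex.normSq_apply]; ring
  field_simp
  rw [hX]
  ring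

theorem conj_sub_mul_sub_mul_eq {u v w : ℂ} (hu : ‖u‖ = 1) (hv : ‖v‖ = 1) (hw : ‖w‖ = 1) :
    conj (u - v) * (w - v) * u = (u - v) * conj (w - v) * w := by
  have h0 : ∀ ζ : ℂ, ‖ζ‖ = 1 → ζ ≠ 0 := fun ζ h => norm_ne_zero_iff.mp (h ▸ one_ne_zero)
  simp only [map_sub, ← Complex.inv_eq_conj hu, ← Complex.inv_eq_conj hv, ← Complex.inv_eq_conj hw]
  field_simp [h0 u hu, h0 v hv, h0 w hw]
  ring

theorem cot_sq_angle_of_norm_eq_one {u v w : ℂ} (hu : ‖u‖ = 1) (hv : ‖v‖ = 1) (hw : ‖w‖ = 1)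
    (hvu : v ≠ u) (hvw : v ≠ w) (huw : u ≠ w) :
    (cos (∠ u v w) / sin (∠ u v w)) ^ 2 =
      ‖u + w‖ ^ 2 / ‖u - w‖ ^ 2 := by
  rw [EuclideanGeometry.angle, vsub_eq_sub, vsub_eq_sub, cot_sq_angle_eq]
  set X := conj (u - v) * (w - v)
  set p := X.re
  set q := X.im
  have hX : X ≠ 0 :=
    mul_ne_zero ((map_ne_zero _).mpr (sub_ne_zero.mpr hvu.symm)) (sub_ne_zero.mpr hvw.symm)
  have hpq : (p : ℂ) * (u - w) = -(q * Complex.I) * (u + w) := by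
    have hXr : X = p + q * Complex.I := (Complex.re_add_im X).symm
    have hXc : conj X = p - q * Complex.I := by rw [hXr]; simp [sub_eq_add_neg]
    have h : X * u = conj X * w := by
      simpa only [X, map_mul, Complex.conj_conj] using conj_sub_mul_sub_mul_eq hu hv hw
    linear_combination h - u * hXr + w * hXc
  have hnorm : p ^ 2 * ‖u - w‖ ^ 2 = q ^ 2 * ‖u + w‖ ^ 2 := by
    have h := congrArg (‖·‖ ^ 2) hpq
    simp only [norm_mul, norm_neg, Complex.norm_real, Complex.norm_I, mul_one, Real.norm_eq_abs,
      mul_pow, sq_abs] at h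
    exact h
  have huw' : ‖u - w‖ ^ 2 ≠ 0 := by simpa [sub_eq_zero] using huw
  have hq : q ^ 2 ≠ 0 := by
    intro hq
    have hp : p = 0 := by simpa [hq, huw'] using hnorm
    exact hX (Complex.ext hp (pow_eq_zero_iff two_ne_zero |>.mp hq))
  rw [div_eq_div_iff hq huw']
  linear_combination hnorm

noncomputable def chordMap (d ζ : ℂ) : ℂ := (d * ζ - 1) / (ζ - d)

section ChordMap

variable {d a b : ℂ}

theorem chordMap_sub_chordMap (ha : a ≠ d) (hb : b ≠ d) :
    chordMap d a - chordMap d b = (1 - d ^ 2) * (a - b) / ((a - d) * (b - d)) := by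
  rw [chordMap, chordMap, div_sub_div _ _ (sub_ne_zero.mpr ha) (sub_ne_zero.mpr hb)]
  ring

theorem chordMap_add_chordMap (ha : a ≠ d) (hb : b ≠ d) :
    chordMap d a + chordMap d b =
      (2 * d * (1 + a * b) - (1 + d ^ 2) * (a + b)) / ((a - d) * (b - d)) := by
  rw [chordMap, chordMap, div_add_div _ _ (sub_ne_zero.mpr ha) (sub_ne_zero.mpr hb)]
  ring

theorem chordMap_ne_chordMap (hd : d ^ 2 ≠ 1) (ha : a ≠ d) (hb : b ≠ d) (hab : a ≠ b) :
    chordMap d a ≠ chordMap d b := by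
  rw [← sub_ne_zero, chordMap_sub_chordMap ha hb]
  exact div_ne_zero (mul_ne_zero (sub_ne_zero.mpr hd.symm) (sub_ne_zero.mpr hab))
    (mul_ne_zero (sub_ne_zero.mpr ha) (sub_ne_zero.mpr hb))

end ChordMap

theorem ne_ofReal_of_norm_eq_one {ζ : ℂ} {d : ℝ} (hζ : ‖ζ‖ = 1) (hd : |d| < 1) : ζ ≠ d := by
  rintro rfl
  rw [Complex.norm_real, Real.norm_eq_abs] at hζ
  linarith

theorem norm_chordMap {d : ℝ} {ζ : ℂ} (hζ : ‖ζ‖ = 1) (hne : ζ ≠ d) : ‖chordMap d ζ‖ = 1 := by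
  have h : d * ζ - 1 = ζ * conj (d - ζ) := by
    rw [map_sub, Complex.conj_ofReal, mul_sub, Complex.mul_conj, Complex.normSq_eq_norm_sq, hζ]
    push_cast; ring
  rw [chordMap, h, norm_div, norm_mul, hζ, one_mul, Complex.norm_conj, norm_sub_rev,
    div_self (norm_ne_zero_iff.mpr (sub_ne_zero.mpr hne))]

theorem exp_add_mul_I_ne {φ β : ℝ} (hβ : sin β ≠ 0) :
    Complex.exp (↑(φ + β) * Complex.I) ≠ Complex.exp (↑φ * Complex.I) := by
  intro h
  rw [Complex.ofReal_add, add_mul, Complex.exp_add] at h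
  have h1 : Complex.exp (↑β * Complex.I) = 1 :=
    mul_left_cancel₀ (Complex.exp_ne_zero _) (h.trans (mul_one _).symm)
  apply hβ
  simpa using congrArg Complex.im h1

theorem cot_sq_angle_chordMap {d : ℝ} (hd : |d| < 1) {a b c : ℂ} (ha : ‖a‖ = 1) (hb : ‖b‖ = 1)
    (hc : ‖c‖ = 1) (hca : c ≠ a) (hcb : c ≠ b) (hab : a ≠ b) :
    (cos (∠ (chordMap d a) (chordMap d c) (chordMap d b)) /
      sin (∠ (chordMap d a) (chordMap d c) (chordMap d b))) ^ 2 =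
      ‖2 * d * (1 + a * b) - (1 + d ^ 2) * (a + b)‖ ^ 2 / ‖(1 - d ^ 2) * (a - b)‖ ^ 2 := by
  have had := ne_ofReal_of_norm_eq_one ha hd
  have hbd := ne_ofReal_of_norm_eq_one hb hd
  have hcd := ne_ofReal_of_norm_eq_one hc hd
  have hd2 : (d : ℂ) ^ 2 ≠ 1 := by exact_mod_cast (by nlinarith [abs_lt.mp hd] : d ^ 2 < 1).ne
  rw [cot_sq_angle_of_norm_eq_one (norm_chordMap ha had) (norm_chordMap hc hcd)
      (norm_chordMap hb hbd) (chordMap_ne_chordMap hd2 hcd had hca)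
      (chordMap_ne_chordMap hd2 hcd hbd hcb) (chordMap_ne_chordMap hd2 had hbd hab),
    chordMap_add_chordMap had hbd, chordMap_sub_chordMap had hbd, norm_div, norm_div, div_pow,
    div_pow, div_div_div_cancel_right₀]
  exact pow_ne_zero 2 (norm_ne_zero_iff.mpr (mul_ne_zero (sub_ne_zero.mpr had)
    (sub_ne_zero.mpr hbd)))

theorem cot_sq_angle_chordMap_exp {d β : ℝ} (hd : |d| < 1) (hβ : sin β ≠ 0) (φ : ℝ) :
    (cos (∠ (chordMap d (Complex.exp (↑(φ + β) * Complex.I)))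
        (chordMap d (Complex.exp (↑φ * Complex.I)))
        (chordMap d (Complex.exp (↑(φ - β) * Complex.I)))) /
      sin (∠ (chordMap d (Complex.exp (↑(φ + β) * Complex.I)))
        (chordMap d (Complex.exp (↑φ * Complex.I)))
        (chordMap d (Complex.exp (↑(φ - β) * Complex.I))))) ^ 2 =
      (2 * d * cos φ - (1 + d ^ 2) * cos β) ^ 2 / ((1 - d ^ 2) ^ 2 * sin β ^ 2) := by
  have ha : Complex.exp (↑(φ + β) * Complex.I) =
      Complex.exp (↑φ * Complex.I) * Complex.exp (↑β * Complex.I) := by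
    rw [Complex.ofReal_add, add_mul, Complex.exp_add]
  have hb : Complex.exp (↑(φ - β) * Complex.I) =
      Complex.exp (↑φ * Complex.I) * (Complex.exp (↑β * Complex.I))⁻¹ := by
    rw [Complex.ofReal_sub, sub_mul, Complex.exp_sub, div_eq_mul_inv]
  have hinv : ∀ x : ℝ, Complex.exp (-x * Complex.I) = (Complex.exp (x * Complex.I))⁻¹ :=
    fun x => by rw [neg_mul, Complex.exp_neg]
  have hcb : Complex.exp (↑φ * Complex.I) ≠ Complex.exp (↑(φ - β) * Complex.I) := by
    rw [sub_eq_add_neg]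
    exact (exp_add_mul_I_ne (by rwa [sin_neg, neg_ne_zero])).symm
  set a := Complex.exp (↑(φ + β) * Complex.I)
  set b := Complex.exp (↑(φ - β) * Complex.I)
  set c := Complex.exp (↑φ * Complex.I)
  set e := Complex.exp (↑β * Complex.I)
  have hc0 : c ≠ 0 := Complex.exp_ne_zero _
  have he0 : e ≠ 0 := Complex.exp_ne_zero _
  have hcosφ : Complex.cos φ = (c + c⁻¹) / 2 := by rw [Complex.cos, hinv]
  have hcosβ : Complex.cos β = (e + e⁻¹) / 2 := by rw [Complex.cos, hinv]
  have hsinβ : Complex.sin β = (e⁻¹ - e) * Complex.I / 2 := by rw [Complex.sin, hinv]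
  have hsum : 2 * d * (1 + a * b) - (1 + d ^ 2) * (a + b) =
      c * (2 * ((2 * d * cos φ - (1 + d ^ 2) * cos β : ℝ) : ℂ)) := by
    rw [ha, hb]
    push_cast
    rw [hcosβ, hcosφ]
    field_simp
    ring
  have hdiff : a - b = c * (2 * ((sin β : ℝ) : ℂ) * Complex.I) := by
    rw [ha, hb, Complex.ofReal_sin, hsinβ]
    linear_combination c * (e - e⁻¹) * Complex.I_sq
  have hab : a ≠ b := by
    rw [← sub_ne_zero, hdiff]
    exact mul_ne_zero hc0 (mul_ne_zero (mul_ne_zero two_ne_zero (Complex.ofReal_ne_zero.mpr hβ))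
      Complex.I_ne_zero)
  have hc1 : ‖c‖ = 1 := Complex.norm_exp_ofReal_mul_I φ
  rw [cot_sq_angle_chordMap hd (Complex.norm_exp_ofReal_mul_I _) (Complex.norm_exp_ofReal_mul_I _)
      hc1 (exp_add_mul_I_ne hβ).symm hcb hab, hsum, hdiff, ← Complex.ofReal_one,
    ← Complex.ofReal_pow, ← Complex.ofReal_sub]
  simp only [norm_mul, Complex.norm_real, Complex.norm_I, Real.norm_eq_abs, Complex.norm_two, hc1,
    mul_pow, sq_abs]
  field_simp

theorem sum_Icc_zpow_eq_zero {K : Type*} [DivisionRing K] {ω : K} {N : ℕ} (hN : ω ^ N = 1)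
    (h1 : ω ≠ 1) : ∑ k ∈ Icc (1 : ℤ) N, ω ^ k = 0 := by
  rcases N.eq_zero_or_pos with rfl | hpos
  · simp
  have hω0 : ω ≠ 0 := by rintro rfl; simp [hpos.ne'] at hN
  rw [Int.Icc_eq_finset_map, sum_map]
  simp only [Function.Embedding.trans_apply, Nat.castEmbedding_apply, addLeftEmbedding_apply,
    zpow_add₀ hω0, zpow_one, zpow_natCast, ← mul_sum, add_sub_cancel_right, Int.toNat_natCast,
    geom_sum_eq h1, hN, sub_self, zero_div, mul_zero]

theorem sum_Icc_cos_eq_zero {N j : ℕ} (hj : ¬ N ∣ j) (s : ℝ) :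
    ∑ k ∈ Icc (1 : ℤ) N, cos (j * (2 * (π / N)) * k + s) = 0 := by
  rcases N.eq_zero_or_pos with rfl | hpos
  · simp
  set ω := Complex.exp (2 * π * Complex.I / N)
  have hω : IsPrimitiveRoot ω N := Complex.isPrimitiveRoot_exp N hpos.ne'
  have hωN : (ω ^ j) ^ N = 1 := by rw [← pow_mul, mul_comm, pow_mul, hω.pow_eq_one, one_pow]
  have hcos : ∀ k : ℤ, cos (j * (2 * (π / N)) * k + s) =
      (Complex.exp (s * Complex.I) * (ω ^ j) ^ k).re := by
    intro k
    rw [← Complex.exp_nat_mul, ← Complex.exp_int_mul, ← Complex.exp_add,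
      ← Complex.exp_ofReal_mul_I_re]
    congr 2
    push_cast
    ring
  rw [sum_congr rfl fun k _ => hcos k, ← Complex.re_sum, ← mul_sum,
    sum_Icc_zpow_eq_zero hωN (mt (hω.pow_eq_one_iff_dvd j).mp hj), mul_zero, Complex.zero_re]

theorem sum_Icc_sq_mul_cos_sub {N : ℕ} (hN : 3 ≤ N) (a b t : ℝ) :
    ∑ k ∈ Icc (1 : ℤ) N, (a * cos (2 * (π / N) * k + t) - b) ^ 2 = N * (a ^ 2 / 2 + b ^ 2) := by
  have h1 := sum_Icc_cos_eq_zero (j := 1) fun h => by linarith [Nat.le_of_dvd one_pos h] t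
  have h2 := sum_Icc_cos_eq_zero (j := 2) fun h => by linarith [Nat.le_of_dvd two_pos h] (2 * t)
  have hexp : ∀ k : ℤ, (a * cos (2 * (π / N) * k + t) - b) ^ 2 = (a ^ 2 / 2 + b ^ 2)
      + a ^ 2 / 2 * cos ((2 : ℕ) * (2 * (π / N)) * k + 2 * t)
      - 2 * a * b * cos ((1 : ℕ) * (2 * (π / N)) * k + t) := by
    intro k
    push_cast
    rw [one_mul, show 2 * (2 * (π / N)) * k + 2 * t = 2 * (2 * (π / N) * k + t) by ring]
    linear_combination a ^ 2 * cos_sq (2 * (π / N) * k + t)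
  rw [sum_congr rfl fun k _ => hexp k, sum_sub_distrib, sum_add_distrib, ← mul_sum, ← mul_sum,
    h1, h2, sum_const, Int.card_Icc, nsmul_eq_mul]
  simp

/-- Over the Poncelet family of harmonic polygons, the sum of the squared
cotangents of the interior angles is invariant and given by
`N·(ρ²·(2 + cos(4α)) − 1)/(1 − cos(4α))`, where `ρ = (1 + d²)/(d² − 1)`;
in particular it does not depend on `t`. -/
theorem sum_cot_sq_interior_angles (N : ℕ) (hN : 3 ≤ N) (d t : ℝ) (hd : |d| < 1)
    (z w : ℤ → ℂ) (θ : ℤ → ℝ)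
    (hz : ∀ k : ℤ, z k = Complex.exp (Complex.I *
      ((2 * (Real.pi / N) * (k : ℝ) + t : ℝ) : ℂ)))
    (hw : ∀ k : ℤ, w k = ((d : ℂ) * (starRingEnd ℂ) (z k) - 1) /
      ((starRingEnd ℂ) (z k) - (d : ℂ)))
    (hθ : ∀ k : ℤ, θ k = EuclideanGeometry.angle (w (k - 1)) (w k) (w (k + 1))) :
    ∑ k ∈ Finset.Icc (1 : ℤ) N, (Real.cos (θ k) / Real.sin (θ k)) ^ 2 =
      (N : ℝ) * (((1 + d ^ 2) / (d ^ 2 - 1)) ^ 2 * (2 + Real.cos (4 * (Real.pi / N))) - 1) /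
        (1 - Real.cos (4 * (Real.pi / N))) := by
  set β := 2 * (π / N)
  have hsinβ : sin β ≠ 0 := by
    have hN' : π / N ≤ π / 3 :=
      div_le_div_of_nonneg_left pi_pos.le (by norm_num) (by exact_mod_cast hN)
    exact (sin_pos_of_pos_of_lt_pi (by positivity) (by linarith [pi_pos])).ne'
  have hw' : ∀ k : ℤ, w k = chordMap d (Complex.exp (↑(-(β * k + t)) * Complex.I)) := by
    intro k
    rw [hw, hz, ← Complex.exp_conj, chordMap]
    congr 4 <;> simp <;> ring
  have hcot : ∀ k : ℤ, (cos (θ k) / sin (θ k)) ^ 2 =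
      (2 * d * cos (β * k + t) - (1 + d ^ 2) * cos β) ^ 2 / ((1 - d ^ 2) ^ 2 * sin β ^ 2) := by
    intro k
    have h := cot_sq_angle_chordMap_exp hd hsinβ (-(β * k + t))
    rw [cos_neg] at h
    have hprev : -(β * ((k - 1 : ℤ) : ℝ) + t) = -(β * k + t) + β := by push_cast; ring
    have hnext : -(β * ((k + 1 : ℤ) : ℝ) + t) = -(β * k + t) - β := by push_cast; ring
    rw [hθ, hw', hw', hw', hprev, hnext, h]
  have h4 : cos (4 * (π / N)) = 1 - 2 * sin β ^ 2 := by
    rw [show 4 * (π / N) = 2 * β by ring, cos_two_mul, cos_sq']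
    ring
  rw [sum_congr rfl fun k _ => hcot k, ← sum_div, sum_Icc_sq_mul_cos_sub hN, h4]
  have hd2 : 1 - d ^ 2 ≠ 0 := by nlinarith [abs_lt.mp hd]
  have hd2' : d ^ 2 - 1 ≠ 0 := by nlinarith [abs_lt.mp hd]
  rw [mul_pow (1 + d ^ 2), cos_sq' β]
  field_simp
  ring
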